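/- For any continuous functions f : ℝ^n → ℝ^p and g : ℝ^p → ℝ^n with p < n, the image of g ∘ f has empty interior in ℝ^n (equivalently, g ∘ f is not surjective onto any open set). -/

import Mathlib

open Set Module

theorem LipschitzWith.interior_range_eq_empty_of_finrank_lt
    {E F : Type*} [NormedAddCommGroup E] [NormedSpace ℝ E] [FiniteDimensional ℝ E]
    [NormedAddCommGroup F] [NormedSpace ℝ F] [FiniteDimensional ℝ F]
    {K : NNReal} {g : E → F} (hg : LipschitzWith K g) (h : finrank ℝ E < finrank ℝ F) :
    interior (range g) = ∅ := by
  have hdim : dimH (range g) < finrank ℝ F :=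
    calc dimH (range g) ≤ dimH (univ : Set E) := hg.dimH_range_le
      _ = finrank ℝ E := Real.dimH_univ_eq_finrank E
      _ < finrank ℝ F := by exact_mod_cast h
  exact interior_eq_empty_iff_dense_compl.2 (dense_compl_of_dimH_lt_finrank hdim)

theorem stmt_6_general (n p : ℕ) (hpn : p < n)
    (f : (Fin n → ℝ) → (Fin p → ℝ)) (g : (Fin p → ℝ) → (Fin n → ℝ))
    (K : NNReal) (hg : LipschitzWith K g) :
    interior (Set.range (g ∘ f)) = ∅ := by
  have hg_range : interior (range g) = ∅ :=
    hg.interior_range_eq_empty_of_finrank_lt (by simpa using hpn)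
  exact subset_empty_iff.1 (hg_range ▸ interior_mono (range_comp_subset_range f g))

/-- For continuous `f : ℝⁿ → ℝᵖ` and Lipschitz `g : ℝᵖ → ℝⁿ` with `p < n`, the image of
`g ∘ f` has empty interior in `ℝⁿ` (so `g ∘ f` is not surjective onto any open set). -/
theorem stmt_6 (n p : ℕ) (hpn : p < n)
    (f : (Fin n → ℝ) → (Fin p → ℝ)) (g : (Fin p → ℝ) → (Fin n → ℝ))
    (hf : Continuous f) (K : NNReal) (hg : LipschitzWith K g) :
    interior (Set.range (g ∘ f)) = ∅ :=
  stmt_6_general n p hpn f g K hg
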